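/- Let κ ∈ ℝ and let ε, μ ∈ ℂ with μ ≠ 0 be constants. Let K = [a₁,b₁] × [a₂,b₂] × [a₃,b₃] ⊂ ℝ³ be a closed rectangular box with aⱼ ≤ bⱼ, and suppose E, ξ : ℝ³ → ℂ³ are twice continuously differentiable on an open neighbourhood of K and satisfy curl(μ⁻¹ curl E) = κ²εE and curl(conj(μ)⁻¹ curl ξ) = κ²·conj(ε)·ξ there. Let W = (μ⁻¹ curl E) × conj(ξ) + E × conj(conj(μ)⁻¹ curl ξ). Then the total outward flux of W through the boundary of K vanishes: Σⱼ₌₁³ ( ∫_{face xⱼ = bⱼ} Wⱼ dA − ∫_{face xⱼ = aⱼ} Wⱼ dA ) = 0, where the integrals are over the corresponding rectangular faces of K. (This is the fundamental relation ∫_{∂K} (ν×μ⁻¹curl E)·conj(ξ)_T + (ν×E)·conj(conj(μ)⁻¹curl ξ)_T dA = 0 of the UWVF for a box-shaped element, since ν·(A×B) = (ν×A)·B.) -/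

import Mathlib

open Complex MeasureTheory

/-- Partial derivative in the `j`-th coordinate direction of a function `ℝ³ → ℂ`. -/
noncomputable def pd (j : Fin 3) (f : (Fin 3 → ℝ) → ℂ) (x : Fin 3 → ℝ) : ℂ :=
  fderiv ℝ f x (Pi.single j 1)

/-- The curl of a vector field `ℝ³ → ℂ³`. -/
noncomputable def curl3 (F : (Fin 3 → ℝ) → Fin 3 → ℂ) (x : Fin 3 → ℝ) : Fin 3 → ℂ :=
  ![pd 1 (fun y => F y 2) x - pd 2 (fun y => F y 1) x,
    pd 2 (fun y => F y 0) x - pd 0 (fun y => F y 2) x,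
    pd 0 (fun y => F y 1) x - pd 1 (fun y => F y 0) x]

/-- The cross product on `ℂ³`. -/
def cross3 (u v : Fin 3 → ℂ) : Fin 3 → ℂ :=
  ![u 1 * v 2 - u 2 * v 1, u 2 * v 0 - u 0 * v 2, u 0 * v 1 - u 1 * v 0]

/-- Componentwise complex conjugation on `ℂ³`. -/
def conjV (v : Fin 3 → ℂ) : Fin 3 → ℂ := fun i => (starRingEnd ℂ) (v i)

lemma pd_sub {f g : (Fin 3 → ℝ) → ℂ} {x} (hf : DifferentiableAt ℝ f x)
    (hg : DifferentiableAt ℝ g x) (j : Fin 3) :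
    pd j (fun y => f y - g y) x = pd j f x - pd j g x := by
  simp [pd, fderiv_fun_sub hf hg]

lemma pd_add {f g : (Fin 3 → ℝ) → ℂ} {x} (hf : DifferentiableAt ℝ f x)
    (hg : DifferentiableAt ℝ g x) (j : Fin 3) :
    pd j (fun y => f y + g y) x = pd j f x + pd j g x := by
  simp [pd, fderiv_fun_add hf hg]

lemma pd_mul {f g : (Fin 3 → ℝ) → ℂ} {x} (hf : DifferentiableAt ℝ f x)
    (hg : DifferentiableAt ℝ g x) (j : Fin 3) :
    pd j (fun y => f y * g y) x = pd j f x * g x + f x * pd j g x := by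
  simp [pd, fderiv_fun_mul hf hg, smul_eq_mul]; ring

lemma pd_conj {f : (Fin 3 → ℝ) → ℂ} {x} (hf : DifferentiableAt ℝ f x) (j : Fin 3) :
    pd j (fun y => (starRingEnd ℂ) (f y)) x = (starRingEnd ℂ) (pd j f x) := by
  have h : HasFDerivAt (fun y => (starRingEnd ℂ) (f y))
      ((Complex.conjCLE : ℂ ≃L[ℝ] ℂ).toContinuousLinearMap.comp (fderiv ℝ f x)) x :=
    (Complex.conjCLE.toContinuousLinearMap.hasFDerivAt).comp x hf.hasFDerivAt
  simp [pd, h.fderiv]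

lemma pd_differentiableAt {f : (Fin 3 → ℝ) → ℂ} {x} (hf : ContDiffAt ℝ 2 f x) (k : Fin 3) :
    DifferentiableAt ℝ (pd k f) x := by
  have h1 : ContDiffAt ℝ 1 (fderiv ℝ f) x := hf.fderiv_right (by norm_num)
  exact (h1.clm_apply contDiffAt_const).differentiableAt one_ne_zero

lemma comp_proj_contDiffAt {F : (Fin 3 → ℝ) → Fin 3 → ℂ} {x} (hF : ContDiffAt ℝ 2 F x)
    (i : Fin 3) : ContDiffAt ℝ 2 (fun y => F y i) x :=
  (ContinuousLinearMap.proj (R := ℝ) (φ := fun _ : Fin 3 => ℂ) i).contDiff.contDiffAt.comp x hF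

lemma curl3_comp_differentiableAt {F : (Fin 3 → ℝ) → Fin 3 → ℂ} {x}
    (hF : ContDiffAt ℝ 2 F x) (i : Fin 3) :
    DifferentiableAt ℝ (fun y => curl3 F y i) x := by
  fin_cases i <;>
  · simp only [curl3, Matrix.cons_val_zero, Matrix.cons_val_one, Matrix.head_cons,
      Matrix.cons_val_two, Matrix.tail_cons]
    exact (pd_differentiableAt (comp_proj_contDiffAt hF _) _).sub
      (pd_differentiableAt (comp_proj_contDiffAt hF _) _)

lemma curl3_conjV {F : (Fin 3 → ℝ) → Fin 3 → ℂ} {x}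
    (hF : ∀ i, DifferentiableAt ℝ (fun y => F y i) x) :
    curl3 (fun y => conjV (F y)) x = conjV (curl3 F x) := by
  funext i
  fin_cases i <;>
  · simp [curl3, conjV, pd_conj (hF _), map_sub]

lemma div_cross3 {F G : (Fin 3 → ℝ) → Fin 3 → ℂ} {x}
    (hF : ∀ i, DifferentiableAt ℝ (fun y => F y i) x)
    (hG : ∀ i, DifferentiableAt ℝ (fun y => G y i) x) :
    pd 0 (fun y => cross3 (F y) (G y) 0) x + pd 1 (fun y => cross3 (F y) (G y) 1) x
      + pd 2 (fun y => cross3 (F y) (G y) 2) x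
    = (curl3 F x 0 * G x 0 + curl3 F x 1 * G x 1 + curl3 F x 2 * G x 2)
      - (F x 0 * curl3 G x 0 + F x 1 * curl3 G x 1 + F x 2 * curl3 G x 2) := by
  simp only [cross3, Matrix.cons_val_zero, Matrix.cons_val_one, Matrix.head_cons,
    Matrix.cons_val_two, Matrix.tail_cons]
  rw [pd_sub ((hF 1).fun_mul (hG 2)) ((hF 2).fun_mul (hG 1)),
    pd_sub ((hF 2).fun_mul (hG 0)) ((hF 0).fun_mul (hG 2)),
    pd_sub ((hF 0).fun_mul (hG 1)) ((hF 1).fun_mul (hG 0)),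
    pd_mul (hF 1) (hG 2), pd_mul (hF 2) (hG 1), pd_mul (hF 2) (hG 0),
    pd_mul (hF 0) (hG 2), pd_mul (hF 0) (hG 1), pd_mul (hF 1) (hG 0)]
  simp only [curl3, Matrix.cons_val_zero, Matrix.cons_val_one, Matrix.head_cons,
    Matrix.cons_val_two, Matrix.tail_cons]
  ring

section aux

variable {E ξ : (Fin 3 → ℝ) → Fin 3 → ℂ} {x : Fin 3 → ℝ} {μ : ℂ}

lemma hA_aux (hE : ContDiffAt ℝ 2 E x) :
    ∀ i, DifferentiableAt ℝ (fun y => (μ⁻¹ • curl3 E y) i) x := fun i => by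
  simp only [Pi.smul_apply, smul_eq_mul]
  exact (curl3_comp_differentiableAt hE i).const_mul μ⁻¹

lemma hξcc_aux (hξ : ContDiffAt ℝ 2 ξ x) :
    ∀ i, DifferentiableAt ℝ (fun y => conjV (ξ y) i) x := fun i => by
  simp only [conjV]
  exact (Complex.conjCLE.toContinuousLinearMap.differentiableAt).comp x
    ((comp_proj_contDiffAt hξ i).differentiableAt (by norm_num))

lemma hCc_aux (hξ : ContDiffAt ℝ 2 ξ x) :
    ∀ i, DifferentiableAt ℝ (fun y => conjV (((starRingEnd ℂ) μ)⁻¹ • curl3 ξ y) i) x :=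
  fun i => by
  simp only [conjV]
  exact (Complex.conjCLE.toContinuousLinearMap.differentiableAt).comp x (hA_aux hξ i)

lemma hP_aux (hE : ContDiffAt ℝ 2 E x) (hξ : ContDiffAt ℝ 2 ξ x) :
    ∀ i, DifferentiableAt ℝ (fun y => cross3 (μ⁻¹ • curl3 E y) (conjV (ξ y)) i) x := by
  intro i
  fin_cases i <;>
  · simp only [cross3, Matrix.cons_val_zero, Matrix.cons_val_one, Matrix.head_cons,
      Matrix.cons_val_two, Matrix.tail_cons]
    exact ((hA_aux hE _).mul (hξcc_aux hξ _)).sub ((hA_aux hE _).mul (hξcc_aux hξ _))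

lemma hQ_aux (hE : ContDiffAt ℝ 2 E x) (hξ : ContDiffAt ℝ 2 ξ x) :
    ∀ i, DifferentiableAt ℝ
      (fun y => cross3 (E y) (conjV (((starRingEnd ℂ) μ)⁻¹ • curl3 ξ y)) i) x := by
  intro i
  have hEc : ∀ i, DifferentiableAt ℝ (fun y => E y i) x := fun i =>
    (comp_proj_contDiffAt hE i).differentiableAt (by norm_num)
  fin_cases i <;>
  · simp only [cross3, Matrix.cons_val_zero, Matrix.cons_val_one, Matrix.head_cons,
      Matrix.cons_val_two, Matrix.tail_cons]
    exact ((hEc _).mul (hCc_aux hξ _)).sub ((hEc _).mul (hCc_aux hξ _))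

lemma W_differentiableAt (hE : ContDiffAt ℝ 2 E x) (hξ : ContDiffAt ℝ 2 ξ x) :
    DifferentiableAt ℝ (fun y => cross3 (μ⁻¹ • curl3 E y) (conjV (ξ y))
      + cross3 (E y) (conjV (((starRingEnd ℂ) μ)⁻¹ • curl3 ξ y))) x := by
  rw [differentiableAt_pi]
  intro i
  simp only [Pi.add_apply]
  exact (hP_aux hE hξ i).add (hQ_aux hE hξ i)

lemma divW_eq_zero (κ : ℝ) (ε : ℂ)
    (hE : ContDiffAt ℝ 2 E x) (hξ : ContDiffAt ℝ 2 ξ x)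
    (hME : curl3 (fun y => μ⁻¹ • curl3 E y) x = ((κ : ℂ) ^ 2 * ε) • E x)
    (hMξ : curl3 (fun y => ((starRingEnd ℂ) μ)⁻¹ • curl3 ξ y) x
      = ((κ : ℂ) ^ 2 * (starRingEnd ℂ) ε) • ξ x) :
    pd 0 (fun y => (cross3 (μ⁻¹ • curl3 E y) (conjV (ξ y))
        + cross3 (E y) (conjV (((starRingEnd ℂ) μ)⁻¹ • curl3 ξ y))) 0) x
    + pd 1 (fun y => (cross3 (μ⁻¹ • curl3 E y) (conjV (ξ y))
        + cross3 (E y) (conjV (((starRingEnd ℂ) μ)⁻¹ • curl3 ξ y))) 1) x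
    + pd 2 (fun y => (cross3 (μ⁻¹ • curl3 E y) (conjV (ξ y))
        + cross3 (E y) (conjV (((starRingEnd ℂ) μ)⁻¹ • curl3 ξ y))) 2) x = 0 := by
  have hEc : ∀ i, DifferentiableAt ℝ (fun y => E y i) x := fun i =>
    (comp_proj_contDiffAt hE i).differentiableAt (by norm_num)
  have hξc : ∀ i, DifferentiableAt ℝ (fun y => ξ y i) x := fun i =>
    (comp_proj_contDiffAt hξ i).differentiableAt (by norm_num)
  have hA := hA_aux (μ := μ) hE
  have hC := hA_aux (μ := (starRingEnd ℂ) μ) hξ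
  have hξcc := hξcc_aux hξ
  have hCc := hCc_aux (μ := μ) hξ
  have hP := hP_aux (μ := μ) hE hξ
  have hQ := hQ_aux (μ := μ) hE hξ
  simp only [Pi.add_apply]
  rw [pd_add (hP 0) (hQ 0), pd_add (hP 1) (hQ 1), pd_add (hP 2) (hQ 2)]
  have h1 := div_cross3 (F := fun y => μ⁻¹ • curl3 E y) (G := fun y => conjV (ξ y)) hA hξcc
  have h2 := div_cross3 (F := E) (G := fun y => conjV (((starRingEnd ℂ) μ)⁻¹ • curl3 ξ y))
    hEc hCc
  have hc1 : curl3 (fun y => conjV (ξ y)) x = conjV (curl3 ξ x) := curl3_conjV hξc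
  have hc2 : curl3 (fun y => conjV (((starRingEnd ℂ) μ)⁻¹ • curl3 ξ y)) x
      = conjV (curl3 (fun y => ((starRingEnd ℂ) μ)⁻¹ • curl3 ξ y) x) := curl3_conjV hC
  beta_reduce at h1 h2
  rw [hME, hc1] at h1
  rw [hc2, hMξ] at h2
  calc pd 0 (fun y => cross3 (μ⁻¹ • curl3 E y) (conjV (ξ y)) 0) x
          + pd 0 (fun y => cross3 (E y) (conjV (((starRingEnd ℂ) μ)⁻¹ • curl3 ξ y)) 0) x
        + (pd 1 (fun y => cross3 (μ⁻¹ • curl3 E y) (conjV (ξ y)) 1) x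
          + pd 1 (fun y => cross3 (E y) (conjV (((starRingEnd ℂ) μ)⁻¹ • curl3 ξ y)) 1) x)
        + (pd 2 (fun y => cross3 (μ⁻¹ • curl3 E y) (conjV (ξ y)) 2) x
          + pd 2 (fun y => cross3 (E y) (conjV (((starRingEnd ℂ) μ)⁻¹ • curl3 ξ y)) 2) x)
      = (pd 0 (fun y => cross3 (μ⁻¹ • curl3 E y) (conjV (ξ y)) 0) x
          + pd 1 (fun y => cross3 (μ⁻¹ • curl3 E y) (conjV (ξ y)) 1) x
          + pd 2 (fun y => cross3 (μ⁻¹ • curl3 E y) (conjV (ξ y)) 2) x)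
        + (pd 0 (fun y => cross3 (E y) (conjV (((starRingEnd ℂ) μ)⁻¹ • curl3 ξ y)) 0) x
          + pd 1 (fun y => cross3 (E y) (conjV (((starRingEnd ℂ) μ)⁻¹ • curl3 ξ y)) 1) x
          + pd 2 (fun y => cross3 (E y) (conjV (((starRingEnd ℂ) μ)⁻¹ • curl3 ξ y)) 2) x) := by
        ring
    _ = 0 := by
        rw [h1, h2]
        simp only [conjV, Pi.smul_apply, smul_eq_mul, map_mul, map_inv₀, Complex.conj_conj,
          map_pow, Complex.conj_ofReal]
        ring

end aux

lemma vec2_eta (y : Fin 2 → ℝ) : ![y 0, y 1] = y := by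
  funext i; fin_cases i <;> rfl

lemma face_int (g : (Fin 2 → ℝ) → ℂ) (c d : Fin 2 → ℝ) :
    ∫ y in Set.Icc c d, g y
      = ∫ p in Set.Icc (c 0) (d 0) ×ˢ Set.Icc (c 1) (d 1), g ![p.1, p.2] := by
  have h := (volume_preserving_finTwoArrow ℝ).setIntegral_preimage_emb
    (MeasurableEquiv.measurableEmbedding _) (fun p : ℝ × ℝ => g ![p.1, p.2])
    (Set.Icc (c 0) (d 0) ×ˢ Set.Icc (c 1) (d 1))
  have hs : (MeasurableEquiv.finTwoArrow : (Fin 2 → ℝ) ≃ᵐ ℝ × ℝ) ⁻¹'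
      (Set.Icc (c 0) (d 0) ×ˢ Set.Icc (c 1) (d 1)) = Set.Icc c d := by
    ext y
    simp [MeasurableEquiv.finTwoArrow, Set.mem_Icc, Pi.le_def, Fin.forall_fin_two]
  rw [hs] at h
  rw [← h]
  refine setIntegral_congr_fun measurableSet_Icc fun y _ => ?_
  simp [MeasurableEquiv.finTwoArrow, vec2_eta]

lemma ins0 (c : ℝ) (p : ℝ × ℝ) : (0 : Fin 3).insertNth c ![p.1, p.2] = ![c, p.1, p.2] := by
  funext j; fin_cases j <;> rfl

lemma ins1 (c : ℝ) (p : ℝ × ℝ) : (1 : Fin 3).insertNth c ![p.1, p.2] = ![p.1, c, p.2] := by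
  funext j; fin_cases j <;> rfl

lemma ins2 (c : ℝ) (p : ℝ × ℝ) : (2 : Fin 3).insertNth c ![p.1, p.2] = ![p.1, p.2, c] := by
  funext j; fin_cases j <;> rfl

/-- The fundamental relation of the UWVF for a box-shaped element: the total outward
flux of `W = (μ⁻¹ curl E) × conj ξ + E × conj(conj(μ)⁻¹ curl ξ)` through the boundary
of the rectangular box `K = [a₁,b₁] × [a₂,b₂] × [a₃,b₃]` vanishes. -/
theorem uwvf_fundamental_flux_box
    (κ : ℝ) (ε μ : ℂ) (hμ : μ ≠ 0) (a b : Fin 3 → ℝ) (hab : ∀ j, a j ≤ b j)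
    (U : Set (Fin 3 → ℝ)) (hU : IsOpen U) (hKU : Set.Icc a b ⊆ U)
    (E ξ : (Fin 3 → ℝ) → Fin 3 → ℂ)
    (hE : ContDiffOn ℝ 2 E U) (hξ : ContDiffOn ℝ 2 ξ U)
    (hME : ∀ x ∈ U, curl3 (fun y => μ⁻¹ • curl3 E y) x = ((κ : ℂ) ^ 2 * ε) • E x)
    (hMξ : ∀ x ∈ U, curl3 (fun y => ((starRingEnd ℂ) μ)⁻¹ • curl3 ξ y) x
      = ((κ : ℂ) ^ 2 * (starRingEnd ℂ) ε) • ξ x) :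
    let W : (Fin 3 → ℝ) → Fin 3 → ℂ := fun y =>
      cross3 (μ⁻¹ • curl3 E y) (conjV (ξ y))
        + cross3 (E y) (conjV (((starRingEnd ℂ) μ)⁻¹ • curl3 ξ y))
    ((∫ p in (Set.Icc (a 1) (b 1)) ×ˢ (Set.Icc (a 2) (b 2)), W ![b 0, p.1, p.2] 0)
        - ∫ p in (Set.Icc (a 1) (b 1)) ×ˢ (Set.Icc (a 2) (b 2)), W ![a 0, p.1, p.2] 0)
      + ((∫ p in (Set.Icc (a 0) (b 0)) ×ˢ (Set.Icc (a 2) (b 2)), W ![p.1, b 1, p.2] 1)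
        - ∫ p in (Set.Icc (a 0) (b 0)) ×ˢ (Set.Icc (a 2) (b 2)), W ![p.1, a 1, p.2] 1)
      + ((∫ p in (Set.Icc (a 0) (b 0)) ×ˢ (Set.Icc (a 1) (b 1)), W ![p.1, p.2, b 2] 2)
        - ∫ p in (Set.Icc (a 0) (b 0)) ×ˢ (Set.Icc (a 1) (b 1)), W ![p.1, p.2, a 2] 2)
      = 0 := by
  intro W
  have hWd : ∀ x ∈ U, DifferentiableAt ℝ W x := fun x hx =>
    W_differentiableAt (hE.contDiffAt (hU.mem_nhds hx)) (hξ.contDiffAt (hU.mem_nhds hx))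
  have hdivEq : Set.EqOn (fun x => ∑ i, fderiv ℝ W x (Pi.single i 1) i)
      (fun _ => (0 : ℂ)) (Set.Icc a b) := by
    intro x hx
    have hxU : x ∈ U := hKU hx
    have hWdx : DifferentiableAt ℝ W x := hWd x hxU
    have hproj : ∀ i : Fin 3, fderiv ℝ (fun y => W y i) x
        = (ContinuousLinearMap.proj (R := ℝ) (φ := fun _ : Fin 3 => ℂ) i).comp
          (fderiv ℝ W x) := fun i =>
      ((ContinuousLinearMap.proj (R := ℝ) (φ := fun _ : Fin 3 => ℂ)
        i).hasFDerivAt.comp x hWdx.hasFDerivAt).fderiv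
    have hpd : ∀ i : Fin 3, pd i (fun y => W y i) x = fderiv ℝ W x (Pi.single i 1) i := by
      intro i
      simp [pd, hproj i]
    simp only [Fin.sum_univ_three]
    rw [← hpd 0, ← hpd 1, ← hpd 2]
    exact divW_eq_zero κ ε (hE.contDiffAt (hU.mem_nhds hxU))
      (hξ.contDiffAt (hU.mem_nhds hxU)) (hME x hxU) (hMξ x hxU)
  have key := integral_divergence_of_hasFDerivAt_off_countable (a := a) (b := b)
    (hab : a ≤ b) W (fun x => fderiv ℝ W x) ∅ Set.countable_empty
    (fun x hx => (hWd x (hKU hx)).continuousAt.continuousWithinAt)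
    (fun x hx => by
      refine (hWd x (hKU ?_)).hasFDerivAt
      have hx1 := hx.1
      rw [Set.mem_univ_pi] at hx1
      exact Set.mem_Icc.2 ⟨fun i => (hx1 i).1.le, fun i => (hx1 i).2.le⟩)
    ((integrableOn_zero).congr_fun hdivEq.symm measurableSet_Icc)
  have h0 : (∫ x in Set.Icc a b, ∑ i, fderiv ℝ W x (Pi.single i 1) i) = 0 := by
    rw [setIntegral_congr_fun measurableSet_Icc hdivEq]
    simp
  rw [h0, Fin.sum_univ_three] at key
  rw [face_int (fun y => W ((0 : Fin 3).insertNth (b 0) y) 0) (a ∘ (0 : Fin 3).succAbove)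
      (b ∘ (0 : Fin 3).succAbove),
    face_int (fun y => W ((0 : Fin 3).insertNth (a 0) y) 0) (a ∘ (0 : Fin 3).succAbove)
      (b ∘ (0 : Fin 3).succAbove),
    face_int (fun y => W ((1 : Fin 3).insertNth (b 1) y) 1) (a ∘ (1 : Fin 3).succAbove)
      (b ∘ (1 : Fin 3).succAbove),
    face_int (fun y => W ((1 : Fin 3).insertNth (a 1) y) 1) (a ∘ (1 : Fin 3).succAbove)
      (b ∘ (1 : Fin 3).succAbove),
    face_int (fun y => W ((2 : Fin 3).insertNth (b 2) y) 2) (a ∘ (2 : Fin 3).succAbove)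
      (b ∘ (2 : Fin 3).succAbove),
    face_int (fun y => W ((2 : Fin 3).insertNth (a 2) y) 2) (a ∘ (2 : Fin 3).succAbove)
      (b ∘ (2 : Fin 3).succAbove)] at key
  simp only [ins0, ins1, ins2,
    show (a ∘ (0 : Fin 3).succAbove) 0 = a 1 from rfl,
    show (a ∘ (0 : Fin 3).succAbove) 1 = a 2 from rfl,
    show (b ∘ (0 : Fin 3).succAbove) 0 = b 1 from rfl,
    show (b ∘ (0 : Fin 3).succAbove) 1 = b 2 from rfl,
    show (a ∘ (1 : Fin 3).succAbove) 0 = a 0 from rfl,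
    show (a ∘ (1 : Fin 3).succAbove) 1 = a 2 from rfl,
    show (b ∘ (1 : Fin 3).succAbove) 0 = b 0 from rfl,
    show (b ∘ (1 : Fin 3).succAbove) 1 = b 2 from rfl,
    show (a ∘ (2 : Fin 3).succAbove) 0 = a 0 from rfl,
    show (a ∘ (2 : Fin 3).succAbove) 1 = a 1 from rfl,
    show (b ∘ (2 : Fin 3).succAbove) 0 = b 0 from rfl,
    show (b ∘ (2 : Fin 3).succAbove) 1 = b 1 from rfl] at key
  exact key.symm
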